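/- There is a constant K = K(d) such that for all r ∈ {0,…,d}, h, h' ∈ (0,1], and d×d matrices A,B,C,D and A',B',C',D' with rank(A) ≤ r and rank(A') ≤ r: |(hh')^{-(2d-2r)} det(A+hB+h²C+h²D)² det(A'+h'B'+h'²C'+h'²D')² − γ_r(A,B)² γ_r(A',B')²| ≤ K(h+h')(ΛΛ')^{2d}, where Λ = ‖A‖+‖B‖+‖C‖+‖D‖ and Λ' = ‖A'‖+‖B'‖+‖C'‖+‖D'‖. -/

import Mathlib

noncomputable def colMix {d : ℕ} (A B : Matrix (Fin d) (Fin d) ℝ) (I : Finset (Fin d)) :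
    Matrix (Fin d) (Fin d) ℝ :=
  Matrix.of fun i j => if j ∈ I then A i j else B i j

/-- `γ_r(A,B) = Σ_{|I|=r} det(G_{A,B}^I)`. -/
noncomputable def gammaR {d : ℕ} (r : ℕ) (A B : Matrix (Fin d) (Fin d) ℝ) : ℝ :=
  ∑ I ∈ Finset.univ.powersetCard r, (colMix A B I).det

/-- `γ_{r-1}(A,B)`, with the convention `γ_{-1} = 0`. -/
noncomputable def gammaPred {d : ℕ} (r : ℕ) (A B : Matrix (Fin d) (Fin d) ℝ) : ℝ :=
  if r = 0 then 0 else gammaR (r - 1) A B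

/-- `γ'_r(A,B,C)`: sum over ordered partitions `(I₁,I₂,I₃)` of sizes `r, d-r-1, 1`,
with columns of `A` on `I₁`, of `C` on the singleton `I₃`, of `B` elsewhere. -/
noncomputable def gamma' {d : ℕ} (r : ℕ) (A B C : Matrix (Fin d) (Fin d) ℝ) : ℝ :=
  ∑ I ∈ Finset.univ.powersetCard r, ∑ k ∈ Iᶜ,
    Matrix.det (Matrix.of fun i j =>
      if j ∈ I then A i j else if j = k then C i j else B i j)

/-- Frobenius (Euclidean) norm of a matrix. -/
noncomputable def frob {d : ℕ} (A : Matrix (Fin d) (Fin d) ℝ) : ℝ :=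
  Real.sqrt (∑ i, ∑ j, (A i j) ^ 2)

/-!
Expanding the determinant column by column,
`det (X + h • Y) = ∑ I, h ^ #Iᶜ * det (colMix X Y I)`. Take `X = A` and `Y = B + h • (C + D)`:
a summand with more than `r ≥ rank A` columns of `A` vanishes, so
`det = h ^ (d - r) * (γ_r(A, B) + O(h Λ ^ d))`, the error coming from the summands with `#I < r`
(which carry an extra factor `h`) and from replacing `Y` by `B` in those with `#I = r`.
Dividing by `h ^ (d - r)`, squaring and multiplying the two approximations gives the bound.
-/

open Matrix Finset
open scoped Nat

variable {d : ℕ}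

theorem det_add_eq_sum_colMix (X Y : Matrix (Fin d) (Fin d) ℝ) :
    (X + Y).det = ∑ I : Finset (Fin d), (colMix X Y I).det := by
  rw [← det_transpose, transpose_add]
  refine (detRowAlternating.map_add_univ Xᵀ Yᵀ).trans (sum_congr rfl fun I _ => ?_)
  rw [← det_transpose (colMix X Y I)]
  congr 1
  ext i j
  by_cases hi : i ∈ I <;> simp [colMix, Finset.piecewise, hi]

theorem colMix_smul_right (X Y : Matrix (Fin d) (Fin d) ℝ) (c : ℝ) (I : Finset (Fin d)) :
    colMix X (c • Y) I = colMix X Y I * diagonal fun j => if j ∈ I then 1 else c := by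
  ext i j
  by_cases hj : j ∈ I <;> simp [colMix, hj, mul_comm]

theorem det_add_smul_eq_sum_colMix (X Y : Matrix (Fin d) (Fin d) ℝ) (c : ℝ) :
    (X + c • Y).det = ∑ I : Finset (Fin d), c ^ #Iᶜ * (colMix X Y I).det := by
  rw [det_add_eq_sum_colMix]
  refine sum_congr rfl fun I _ => ?_
  rw [colMix_smul_right, det_mul, det_diagonal, prod_ite, prod_const_one, prod_const, one_mul,
    mul_comm, filter_not, filter_mem_eq_inter, univ_inter, compl_eq_univ_sdiff]

theorem det_eq_zero_of_rank_lt_card {K n : Type*} [Field K] [Fintype n] [DecidableEq n]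
    {A M : Matrix n n K} {I : Finset n} (hMA : ∀ j ∈ I, M.col j = A.col j)
    (hrank : A.rank < #I) : M.det = 0 := by
  by_contra hdet
  have hind : LinearIndependent K fun j : I => A.col j := by
    have hM := (linearIndependent_cols_of_det_ne_zero hdet).comp _
      (Subtype.val_injective (p := (· ∈ I)))
    rwa [show M.col ∘ Subtype.val = fun j : I => A.col j from funext fun j => hMA j j.2] at hM
  have hle : Submodule.span K (Set.range fun j : I => A.col j) ≤
      Submodule.span K (Set.range A.col) :=
    Submodule.span_mono (Set.range_comp_subset_range _ _)
  have hfin := Submodule.finrank_mono hle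
  rw [finrank_span_eq_card hind, ← rank_eq_finrank_span_cols, Fintype.card_coe] at hfin
  omega

theorem abs_det_le_of_abs_le {M : Matrix (Fin d) (Fin d) ℝ} {β : ℝ} (hM : ∀ i j, |M i j| ≤ β) :
    |M.det| ≤ d ! * β ^ d := by
  simpa using det_le (abv := AbsoluteValue.abs) hM

theorem abs_colMix_le {X Y : Matrix (Fin d) (Fin d) ℝ} {β : ℝ} (hX : ∀ i j, |X i j| ≤ β)
    (hY : ∀ i j, |Y i j| ≤ β) (I : Finset (Fin d)) (i j : Fin d) : |colMix X Y I i j| ≤ β := by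
  by_cases hj : j ∈ I <;> simp [colMix, hj, hX, hY]

theorem abs_sum_le_two_pow_mul {s : Finset (Finset (Fin d))} {f : Finset (Fin d) → ℝ} {b : ℝ}
    (hb : 0 ≤ b) (hf : ∀ I ∈ s, |f I| ≤ b) : |∑ I ∈ s, f I| ≤ 2 ^ d * b := by
  have hcard : (#s : ℝ) ≤ 2 ^ d := by
    exact_mod_cast (card_le_univ s).trans_eq (by simp [Fintype.card_finset])
  calc |∑ I ∈ s, f I| ≤ ∑ I ∈ s, |f I| := abs_sum_le_sum_abs _ _
    _ ≤ #s • b := sum_le_card_nsmul _ _ _ hf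
    _ ≤ 2 ^ d * b := by rw [nsmul_eq_mul]; gcongr

theorem abs_gammaR_le (r : ℕ) {A B : Matrix (Fin d) (Fin d) ℝ} {β : ℝ} (hβ : 0 ≤ β)
    (hA : ∀ i j, |A i j| ≤ β) (hB : ∀ i j, |B i j| ≤ β) :
    |gammaR r A B| ≤ 2 ^ d * (d ! * β ^ d) :=
  abs_sum_le_two_pow_mul (by positivity) fun I _ => abs_det_le_of_abs_le (abs_colMix_le hA hB I)

theorem abs_det_add_smul_sub_det_le {X Y : Matrix (Fin d) (Fin d) ℝ} {h β : ℝ} (h0 : 0 ≤ h)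
    (h1 : h ≤ 1) (hβ : 0 ≤ β) (hX : ∀ i j, |X i j| ≤ β) (hY : ∀ i j, |Y i j| ≤ β) :
    |(X + h • Y).det - X.det| ≤ 2 ^ d * (h * (d ! * β ^ d)) := by
  have hX_eq : colMix X Y univ = X := by ext i j; simp [colMix]
  rw [det_add_smul_eq_sum_colMix, ← add_sum_erase _ _ (mem_univ univ), compl_univ, card_empty,
    pow_zero, one_mul, hX_eq, add_sub_cancel_left]
  refine abs_sum_le_two_pow_mul (by positivity) fun I hI => ?_
  have hIc : #Iᶜ ≠ 0 := by
    simpa [card_eq_zero, compl_eq_empty_iff] using ne_of_mem_erase hI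
  rw [abs_mul, abs_of_nonneg (by positivity)]
  exact mul_le_mul (pow_le_of_le_one h0 h1 hIc) (abs_det_le_of_abs_le (abs_colMix_le hX hY I))
    (abs_nonneg _) h0

theorem abs_det_sub_pow_mul_gammaR_le {r : ℕ} (hr : r ≤ d) {A B N : Matrix (Fin d) (Fin d) ℝ}
    (hA : A.rank ≤ r) {h β : ℝ} (h0 : 0 ≤ h) (h1 : h ≤ 1) (hβ : 0 ≤ β)
    (hAβ : ∀ i j, |A i j| ≤ β) (hBβ : ∀ i j, |B i j| ≤ β) (hNβ : ∀ i j, |N i j| ≤ β) :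
    |(A + h • (B + h • N)).det - h ^ (d - r) * gammaR r A B|
      ≤ 2 ^ d * (h ^ (d - r) * (2 ^ d * (h * (d ! * β ^ d)))) := by
  have hgamma : h ^ (d - r) * gammaR r A B = ∑ I : Finset (Fin d),
      if #I = r then h ^ (d - r) * (colMix A B I).det else 0 := by
    simp only [gammaR, powersetCard_eq_filter, powerset_univ, sum_filter, mul_sum, mul_ite,
      mul_zero]
  rw [det_add_smul_eq_sum_colMix, hgamma, ← sum_sub_distrib]
  refine abs_sum_le_two_pow_mul (by positivity) fun I _ => ?_
  have hIc : #Iᶜ = d - #I := by simp [card_compl]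
  rcases lt_trichotomy #I r with hlt | rfl | hgt
  · have hMβ : ∀ i j, |(B + h • N) i j| ≤ 2 * β := fun i j => by
      calc |(B + h • N) i j| ≤ |B i j| + h * |N i j| := by
            simpa [abs_mul, abs_of_nonneg h0] using abs_add_le (B i j) (h * N i j)
        _ ≤ β + 1 * β := by gcongr; exacts [hBβ i j, hNβ i j]
        _ = 2 * β := by ring
    have hpow : h ^ #Iᶜ ≤ h ^ (d - r) * h := by
      rw [← pow_succ]; exact pow_le_pow_of_le_one h0 h1 (by omega)
    rw [if_neg hlt.ne, sub_zero, abs_mul, abs_of_nonneg (by positivity)]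
    calc h ^ #Iᶜ * |(colMix A (B + h • N) I).det|
        ≤ h ^ (d - r) * h * (d ! * (2 * β) ^ d) :=
          mul_le_mul hpow (abs_det_le_of_abs_le (abs_colMix_le (fun i j => by
            linarith [hAβ i j]) hMβ I)) (abs_nonneg _) (by positivity)
      _ = h ^ (d - r) * (2 ^ d * (h * (d ! * β ^ d))) := by ring
  · have hsplit : colMix A (B + h • N) I = colMix A B I + h • colMix 0 N I := by
      ext i j; by_cases hj : j ∈ I <;> simp [colMix, hj]
    rw [if_pos rfl, hIc, hsplit, ← mul_sub, abs_mul, abs_of_nonneg (by positivity)]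
    gcongr
    exact abs_det_add_smul_sub_det_le h0 h1 hβ (abs_colMix_le hAβ hBβ I)
      (abs_colMix_le (by simpa using fun _ _ => hβ) hNβ I)
  · have hcols : ∀ j ∈ I, (colMix A (B + h • N) I).col j = A.col j := fun j hj => by
      ext i; simp [colMix, hj]
    rw [if_neg hgt.ne', det_eq_zero_of_rank_lt_card hcols (hA.trans_lt hgt), mul_zero,
      sub_zero, abs_zero]
    positivity

theorem frob_nonneg (A : Matrix (Fin d) (Fin d) ℝ) : 0 ≤ frob A := Real.sqrt_nonneg _

theorem abs_apply_le_frob (A : Matrix (Fin d) (Fin d) ℝ) (i j : Fin d) : |A i j| ≤ frob A := by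
  rw [frob, ← Real.sqrt_sq_eq_abs]
  gcongr
  calc A i j ^ 2 ≤ ∑ j', A i j' ^ 2 :=
        single_le_sum (f := fun j' => A i j' ^ 2) (fun _ _ => sq_nonneg _) (mem_univ j)
    _ ≤ ∑ i', ∑ j', A i' j' ^ 2 :=
        single_le_sum (f := fun i' => ∑ j', A i' j' ^ 2)
          (fun _ _ => sum_nonneg fun _ _ => sq_nonneg _) (mem_univ i)

theorem abs_det_div_pow_sub_gammaR_le {r : ℕ} (hr : r ≤ d) {A : Matrix (Fin d) (Fin d) ℝ}
    (hA : A.rank ≤ r) (B C D : Matrix (Fin d) (Fin d) ℝ) {h : ℝ} (h0 : 0 < h) (h1 : h ≤ 1) :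
    |(A + h • B + h ^ 2 • C + h ^ 2 • D).det / h ^ (d - r) - gammaR r A B|
        ≤ h * (4 ^ d * d ! * (frob A + frob B + frob C + frob D) ^ d) ∧
      |gammaR r A B| ≤ 4 ^ d * d ! * (frob A + frob B + frob C + frob D) ^ d := by
  set Λ := frob A + frob B + frob C + frob D
  have := frob_nonneg A; have := frob_nonneg B; have := frob_nonneg C; have := frob_nonneg D
  have hAΛ : ∀ i j, |A i j| ≤ Λ := fun i j => by linarith [abs_apply_le_frob A i j]
  have hBΛ : ∀ i j, |B i j| ≤ Λ := fun i j => by linarith [abs_apply_le_frob B i j]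
  have hNΛ : ∀ i j, |(C + D) i j| ≤ Λ := fun i j => by
    rw [Matrix.add_apply]
    linarith [abs_add_le (C i j) (D i j), abs_apply_le_frob C i j, abs_apply_le_frob D i j]
  have hΛ : 0 ≤ Λ := by positivity
  have hM : A + h • B + h ^ 2 • C + h ^ 2 • D = A + h • (B + h • (C + D)) := by module
  have hpow : 0 < h ^ (d - r) := by positivity
  refine ⟨?_, (abs_gammaR_le r hΛ hAΛ hBΛ).trans ?_⟩
  · rw [hM, ← mul_div_cancel_left₀ (gammaR r A B) hpow.ne', ← sub_div, abs_div,
      abs_of_pos hpow, div_le_iff₀ hpow]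
    calc _ ≤ 2 ^ d * (h ^ (d - r) * (2 ^ d * (h * (d ! * Λ ^ d)))) :=
          abs_det_sub_pow_mul_gammaR_le hr hA h0.le h1 hΛ hAΛ hBΛ hNΛ
      _ = _ := by rw [show (4 : ℝ) ^ d = 2 ^ d * 2 ^ d by rw [← mul_pow]; norm_num]; ring
  · rw [mul_assoc]
    gcongr
    norm_num

theorem abs_sq_sub_sq_le {x γ h c : ℝ} (h0 : 0 ≤ h) (h1 : h ≤ 1) (hx : |x - γ| ≤ h * c)
    (hγ : |γ| ≤ c) : |x ^ 2 - γ ^ 2| ≤ 3 * h * c ^ 2 ∧ x ^ 2 ≤ 4 * c ^ 2 := by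
  have hc : 0 ≤ c := (abs_nonneg _).trans hγ
  have hxγ : |x - γ| ≤ c := hx.trans (by nlinarith)
  have hsum : |x + γ| ≤ 3 * c := by
    calc |x + γ| = |(x - γ) + 2 * γ| := by ring_nf
      _ ≤ |x - γ| + 2 * |γ| := by simpa [abs_mul] using abs_add_le (x - γ) (2 * γ)
      _ ≤ 3 * c := by linarith
  have habs : |x| ≤ 2 * c := by
    calc |x| = |(x - γ) + γ| := by ring_nf
      _ ≤ |x - γ| + |γ| := abs_add_le _ _
      _ ≤ 2 * c := by linarith
  constructor
  · calc |x ^ 2 - γ ^ 2| = |x - γ| * |x + γ| := by rw [← abs_mul]; ring_nf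
      _ ≤ (h * c) * (3 * c) := mul_le_mul hx hsum (abs_nonneg _) (by positivity)
      _ = 3 * h * c ^ 2 := by ring
  · calc x ^ 2 = |x| ^ 2 := (sq_abs x).symm
      _ ≤ (2 * c) ^ 2 := pow_le_pow_left₀ (abs_nonneg x) habs 2
      _ = 4 * c ^ 2 := by ring

theorem abs_sq_mul_sq_sub_sq_mul_sq_le {x γ h c x' γ' h' c' : ℝ} (h0 : 0 ≤ h) (h1 : h ≤ 1)
    (hx : |x - γ| ≤ h * c) (hγ : |γ| ≤ c) (h0' : 0 ≤ h') (h1' : h' ≤ 1)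
    (hx' : |x' - γ'| ≤ h' * c') (hγ' : |γ'| ≤ c') :
    |x ^ 2 * x' ^ 2 - γ ^ 2 * γ' ^ 2| ≤ 12 * (h + h') * (c * c') ^ 2 := by
  obtain ⟨hd, hx2⟩ := abs_sq_sub_sq_le h0 h1 hx hγ
  obtain ⟨hd', -⟩ := abs_sq_sub_sq_le h0' h1' hx' hγ'
  have hγ'2 : γ' ^ 2 ≤ c' ^ 2 := by
    simpa only [sq_abs] using pow_le_pow_left₀ (abs_nonneg γ') hγ' 2
  calc |x ^ 2 * x' ^ 2 - γ ^ 2 * γ' ^ 2|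
      = |x ^ 2 * (x' ^ 2 - γ' ^ 2) + γ' ^ 2 * (x ^ 2 - γ ^ 2)| := by ring_nf
    _ ≤ |x ^ 2 * (x' ^ 2 - γ' ^ 2)| + |γ' ^ 2 * (x ^ 2 - γ ^ 2)| := abs_add_le _ _
    _ = x ^ 2 * |x' ^ 2 - γ' ^ 2| + γ' ^ 2 * |x ^ 2 - γ ^ 2| := by
        rw [abs_mul, abs_mul, abs_sq, abs_sq]
    _ ≤ 4 * c ^ 2 * (3 * h' * c' ^ 2) + c' ^ 2 * (3 * h * c ^ 2) := by gcongr
    _ ≤ 12 * (h + h') * (c * c') ^ 2 := by nlinarith [mul_nonneg h0 (sq_nonneg (c * c'))]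

theorem det_sq_product_expansion (d : ℕ) :
    ∃ K > (0:ℝ), ∀ r ≤ d, ∀ h ∈ Set.Ioc (0:ℝ) 1, ∀ h' ∈ Set.Ioc (0:ℝ) 1,
      ∀ A B C D A' B' C' D' : Matrix (Fin d) (Fin d) ℝ,
        A.rank ≤ r → A'.rank ≤ r →
        |(A + h • B + (h ^ 2) • C + (h ^ 2) • D).det ^ 2
              * (A' + h' • B' + (h' ^ 2) • C' + (h' ^ 2) • D').det ^ 2
              / (h * h') ^ (2 * d - 2 * r)
            - gammaR r A B ^ 2 * gammaR r A' B' ^ 2|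
          ≤ K * (h + h')
              * ((frob A + frob B + frob C + frob D)
                  * (frob A' + frob B' + frob C' + frob D')) ^ (2 * d) := by
  refine ⟨12 * (4 ^ d * d !) ^ 4, by positivity, ?_⟩
  rintro r hr h ⟨h0, h1⟩ h' ⟨h0', h1'⟩ A B C D A' B' C' D' hA hA'
  obtain ⟨hx, hγ⟩ := abs_det_div_pow_sub_gammaR_le hr hA B C D h0 h1
  obtain ⟨hx', hγ'⟩ := abs_det_div_pow_sub_gammaR_le hr hA' B' C' D' h0' h1'
  have hexp : 2 * d - 2 * r = (d - r) * 2 := by omega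
  calc _ = |((A + h • B + h ^ 2 • C + h ^ 2 • D).det / h ^ (d - r)) ^ 2
          * ((A' + h' • B' + h' ^ 2 • C' + h' ^ 2 • D').det / h' ^ (d - r)) ^ 2
          - gammaR r A B ^ 2 * gammaR r A' B' ^ 2| := by
        rw [hexp, mul_pow, pow_mul, pow_mul, div_pow, div_pow, div_mul_div_comm]
    _ ≤ _ := abs_sq_mul_sq_sub_sq_mul_sq_le h0.le h1 hx hγ h0'.le h1' hx' hγ'
    _ = _ := by rw [mul_pow _ _ (2 * d)]; ring
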